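/- arXiv:1505.07576 — 2 statements merged into one kernel-verified Lean document; each statement's English description precedes it below -/
import Mathlib

section
/- Let n ≥ 1, let V : ℝⁿ → ℝ and a : ℝⁿ → ℝⁿ be twice continuously differentiable with V(0) = 0, V(z) > 0 for z ≠ 0, ∇V(z) · a(z) < 0 for z ≠ 0, and a(0) = 0. Let P := Hess V(0) and A := the Jacobian of a at 0. Then zᵀ (P A) z ≤ 0 for all z ∈ ℝⁿ. -/
/-! Both `fderiv V` and `a` vanish at the origin (`0` is a minimum of `V`), so along a ray
`t ↦ t • z` the dissipation `fderiv V (t • z) (a (t • z))` is `t² · (P z) (A z) + o(t²)`.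
Dividing the nonpositive quantity by `t²` and letting `t → 0` gives `(P z) (A z) ≤ 0`. -/

open Filter Topology

section

variable {𝕜 E F : Type*} [NontriviallyNormedField 𝕜] [NormedAddCommGroup E] [NormedSpace 𝕜 E]
  [NormedAddCommGroup F] [NormedSpace 𝕜 F]

theorem HasFDerivAt.tendsto_inv_smul_comp_smul {f : E → F} {f' : E →L[𝕜] F}
    (hf : HasFDerivAt f f' 0) (hf0 : f 0 = 0) (z : E) :
    Tendsto (fun t : 𝕜 => t⁻¹ • f (t • z)) (𝓝[≠] 0) (𝓝 (f' z)) := by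
  have hray : HasDerivAt (fun t : 𝕜 => f (t • z)) (f' z) 0 := by
    have hline : HasDerivAt (fun t : 𝕜 => t • z) z 0 := by
      simpa using (hasDerivAt_id (0 : 𝕜)).smul_const z
    exact (zero_smul 𝕜 z ▸ hf).comp_hasDerivAt 0 hline
  refine (hasDerivAt_iff_tendsto_slope.mp hray).congr' (eventually_of_mem self_mem_nhdsWithin ?_)
  intro t _
  simp [slope_def_module, hf0]

end

variable {E F : Type*} [NormedAddCommGroup E] [NormedSpace ℝ E]
  [NormedAddCommGroup F] [NormedSpace ℝ F]

theorem HasFDerivAt.apply_apply_nonpos_of_eventually_nonpos {f : E → F →L[ℝ] ℝ} {g : E → F}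
    {B : E →L[ℝ] F →L[ℝ] ℝ} {A : E →L[ℝ] F} (hf : HasFDerivAt f B 0) (hg : HasFDerivAt g A 0)
    (hf0 : f 0 = 0) (hg0 : g 0 = 0) (hfg : ∀ᶠ w in 𝓝 0, f w (g w) ≤ 0) (z : E) :
    B z (A z) ≤ 0 := by
  have hlim : Tendsto (fun t : ℝ => (t⁻¹ • f (t • z)) (t⁻¹ • g (t • z))) (𝓝[≠] 0)
      (𝓝 (B z (A z))) :=
    (isBoundedBilinearMap_apply.continuous.tendsto (B z, A z)).comp
      ((hf.tendsto_inv_smul_comp_smul hf0 z).prodMk_nhds (hg.tendsto_inv_smul_comp_smul hg0 z))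
  have hray : Tendsto (fun t : ℝ => t • z) (𝓝[≠] 0) (𝓝 0) := by
    have hcont : Continuous fun t : ℝ => t • z := continuous_id.smul continuous_const
    exact (hcont.tendsto' 0 0 (zero_smul ℝ z)).mono_left nhdsWithin_le_nhds
  refine le_of_tendsto hlim ((hray.eventually hfg).mono fun t ht => ?_)
  have hscale : (t⁻¹ • f (t • z)) (t⁻¹ • g (t • z)) = t⁻¹ ^ 2 * f (t • z) (g (t • z)) := by
    simp only [smul_apply, map_smul, smul_eq_mul]
    ring
  rw [hscale]
  exact mul_nonpos_of_nonneg_of_nonpos (sq_nonneg _) ht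

theorem stmt_3_general (n : ℕ)
    (V : EuclideanSpace ℝ (Fin n) → ℝ) (a : EuclideanSpace ℝ (Fin n) → EuclideanSpace ℝ (Fin n))
    (hV : ContDiff ℝ 2 V) (ha : ContDiff ℝ 2 a)
    (hV0 : V 0 = 0) (hVpos : ∀ z, z ≠ 0 → 0 < V z)
    (hdiss : ∀ z, z ≠ 0 → fderiv ℝ V z (a z) < 0)
    (ha0 : a 0 = 0) :
    ∀ z : EuclideanSpace ℝ (Fin n),
      fderiv ℝ (fderiv ℝ V) 0 z (fderiv ℝ a 0 z) ≤ 0 := by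
  have hmin : IsLocalMin V 0 := Eventually.of_forall fun w => by
    rcases eq_or_ne w 0 with rfl | hw
    · exact le_rfl
    · exact hV0 ▸ (hVpos w hw).le
  have hDV0 : fderiv ℝ V 0 = 0 := hmin.fderiv_eq_zero
  have hDDV : HasFDerivAt (fderiv ℝ V) (fderiv ℝ (fderiv ℝ V) 0) 0 :=
    ((hV.fderiv_right (m := 1) le_rfl).differentiable one_ne_zero 0).hasFDerivAt
  have hDa : HasFDerivAt a (fderiv ℝ a 0) 0 := (ha.differentiable two_ne_zero 0).hasFDerivAt
  refine hDDV.apply_apply_nonpos_of_eventually_nonpos hDa hDV0 ha0 (Eventually.of_forall fun w => ?_)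
  rcases eq_or_ne w 0 with rfl | hw
  · simp [hDV0]
  · exact (hdiss w hw).le

theorem stmt_3 (n : ℕ) (hn : 1 ≤ n)
    (V : EuclideanSpace ℝ (Fin n) → ℝ) (a : EuclideanSpace ℝ (Fin n) → EuclideanSpace ℝ (Fin n))
    (hV : ContDiff ℝ 2 V) (ha : ContDiff ℝ 2 a)
    (hV0 : V 0 = 0) (hVpos : ∀ z, z ≠ 0 → 0 < V z)
    (hdiss : ∀ z, z ≠ 0 → fderiv ℝ V z (a z) < 0)
    (ha0 : a 0 = 0) :
    ∀ z : EuclideanSpace ℝ (Fin n),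
      fderiv ℝ (fderiv ℝ V) 0 z (fderiv ℝ a 0 z) ≤ 0 :=
  stmt_3_general n V a hV ha hV0 hVpos hdiss ha0
end

section
/- Let n ≥ 1, let V : ℝⁿ → ℝ and a : ℝⁿ → ℝⁿ be C² with V(0) = 0, a(0) = 0, Hess V(0) positive definite, the Jacobian A of a at 0 invertible, and ∇V(z)·a(z) < 0 for all z ≠ 0. Then the matrix P A, with P := Hess V(0), has the property that zᵀ(PA)z ≤ 0 for all z; moreover if additionally zᵀ(PA)z < 0 for all z ≠ 0, then there exist C > 0 and ε > 0 such that |∇V(z) · a(z)| ≥ C |z|² for all |z| ≤ ε. -/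
/-!
Write `g z = V' z (a z)`. Since `g ≤ 0 = g 0`, the origin is a critical point of `g`; its
derivative there is `V' 0 ∘ A`, and `A` is onto, so `V' 0 = 0`. Hence `g` agrees with the
quadratic form `q z = zᵀ P A z` up to `o(‖z‖²)`. Scaling along rays forces `q ≤ 0`; when `q` is
negative definite, compactness of the unit sphere gives `q z ≤ -c ‖z‖²`, which absorbs the error
near the origin.
-/

open Asymptotics Filter Topology

section Asymptotics

variable {𝕜 E F G : Type*} [NontriviallyNormedField 𝕜]
  [NormedAddCommGroup E] [NormedSpace 𝕜 E] [NormedAddCommGroup F] [NormedSpace 𝕜 F]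
  [NormedAddCommGroup G] [NormedSpace 𝕜 G]

theorem isLittleO_clm_apply_sub_linearization {φ : E → F →L[𝕜] G} {a : E → F}
    {H : E →L[𝕜] F →L[𝕜] G} {A : E →L[𝕜] F} (hφ : HasFDerivAt φ H 0) (hφ0 : φ 0 = 0)
    (ha : HasFDerivAt a A 0) (ha0 : a 0 = 0) :
    (fun z => φ z (a z) - H z (A z)) =o[𝓝 0] fun z => ‖z‖ ^ 2 := by
  have hφH : (fun z => φ z - H z) =o[𝓝 0] fun z => z := by
    simpa [hφ0] using hφ.isLittleO
  have haA : (fun z => a z - A z) =o[𝓝 0] fun z => z := by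
    simpa [ha0] using ha.isLittleO
  have haO : a =O[𝓝 0] fun z => z := by
    simpa [ha0] using ha.isBigO_sub
  have hHO : (fun z => H z) =O[𝓝 0] fun z => z := H.isBigO_id _
  have h₁ : (fun z => (φ z - H z) (a z)) =o[𝓝 0] fun z => ‖z‖ * ‖z‖ :=
    isBoundedBilinearMap_apply.isBigO_comp.trans_isLittleO
      (hφH.norm_norm.mul_isBigO haO.norm_norm)
  have h₂ : (fun z => H z (a z - A z)) =o[𝓝 0] fun z => ‖z‖ * ‖z‖ :=
    isBoundedBilinearMap_apply.isBigO_comp.trans_isLittleO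
      (hHO.norm_norm.mul_isLittleO haA.norm_norm)
  simp only [sq]
  refine (h₁.add h₂).congr_left fun z => ?_
  simp only [sub_apply, map_sub]
  abel

end Asymptotics

section Real

variable {E F : Type*} [NormedAddCommGroup E] [NormedSpace ℝ E]
  [NormedAddCommGroup F] [NormedSpace ℝ F]

theorem eq_zero_of_clm_apply_nonpos {φ : E → F →L[ℝ] ℝ} {a : E → F} {A : E →L[ℝ] F} {x₀ : E}
    (hφ : DifferentiableAt ℝ φ x₀) (ha : HasFDerivAt a A x₀) (hA : Function.Surjective A)
    (ha0 : a x₀ = 0) (hle : ∀ᶠ x in 𝓝 x₀, φ x (a x) ≤ 0) : φ x₀ = 0 := by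
  have hmax : IsLocalMax (fun x => φ x (a x)) x₀ := by
    filter_upwards [hle] with x hx
    simpa [ha0] using hx
  have hderiv := hmax.hasFDerivAt_eq_zero (hφ.hasFDerivAt.clm_apply ha)
  simp only [ha0, map_zero, add_zero] at hderiv
  ext w
  obtain ⟨u, rfl⟩ := hA w
  simpa using congr($hderiv u)

theorem nonpos_of_isLittleO_sub {g q : E → ℝ} (hq : ∀ (s : ℝ) z, q (s • z) = s ^ 2 * q z)
    (hg : ∀ᶠ z in 𝓝 0, g z ≤ 0) (hgq : (fun z => g z - q z) =o[𝓝 0] fun z => ‖z‖ ^ 2)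
    (z : E) : q z ≤ 0 := by
  by_contra! hpos
  have hz : z ≠ 0 := by
    rintro rfl
    simp [show q 0 = 0 by simpa using hq 0 0] at hpos
  have hline : Tendsto (fun t : ℝ => t • z) (𝓝[≠] 0) (𝓝 0) :=
    ((continuous_id.smul continuous_const).tendsto' 0 0 (zero_smul ℝ z)).mono_left
      nhdsWithin_le_nhds
  have hc : 0 < q z / (2 * ‖z‖ ^ 2) := by have := norm_pos_iff.2 hz; positivity
  obtain ⟨t, hbound, hgt, ht⟩ :=
    ((hgq.comp_tendsto hline).def hc |>.and ((hline.eventually hg).and self_mem_nhdsWithin)).exists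
  simp only [Function.comp_apply, hq, norm_smul, Real.norm_eq_abs, mul_pow, sq_abs] at hbound hgt
  have ht : t ≠ 0 := ht
  have hz2 : ‖z‖ ^ 2 ≠ 0 := by simpa using hz
  have hqt : 0 < t ^ 2 * q z := by positivity
  have hhalf : q z / (2 * ‖z‖ ^ 2) * |t ^ 2 * ‖z‖ ^ 2| = t ^ 2 * q z / 2 := by
    rw [abs_of_nonneg (by positivity)]
    field_simp
  linarith [(abs_le.mp (hhalf ▸ hbound)).1]

theorem exists_le_neg_mul_norm_sq [FiniteDimensional ℝ E] {q : E → ℝ} (hcont : Continuous q)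
    (hq : ∀ (s : ℝ) z, q (s • z) = s ^ 2 * q z) (hneg : ∀ z ≠ 0, q z < 0) :
    ∃ c > 0, ∀ z, q z ≤ -c * ‖z‖ ^ 2 := by
  have hq0 : q 0 = 0 := by simpa using hq 0 0
  rcases subsingleton_or_nontrivial E with hE | hE
  · exact ⟨1, one_pos, fun z => by simp [Subsingleton.elim z 0, hq0]⟩
  obtain ⟨z₀, hz₀, hmax⟩ := (isCompact_sphere (0 : E) 1).exists_isMaxOn
    (NormedSpace.sphere_nonempty.2 zero_le_one) hcont.continuousOn
  refine ⟨-q z₀, neg_pos.2 (hneg z₀ (ne_zero_of_mem_unit_sphere ⟨z₀, hz₀⟩)), fun z => ?_⟩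
  rcases eq_or_ne z 0 with rfl | hz
  · simp [hq0]
  have hnz : ‖z‖ ≠ 0 := norm_ne_zero_iff.2 hz
  have hscale : q z = ‖z‖ ^ 2 * q (‖z‖⁻¹ • z) := by
    rw [← hq, smul_smul, mul_inv_cancel₀ hnz, one_smul]
  have hle : q (‖z‖⁻¹ • z) ≤ q z₀ := hmax (by simp [norm_smul, hnz])
  rw [hscale]
  nlinarith [sq_nonneg ‖z‖]

end Real

theorem exists_mul_norm_sq_le_abs_of_isLittleO_sub {E : Type*} [NormedAddCommGroup E]
    {g q : E → ℝ} {c : ℝ} (hc : 0 < c) (hq : ∀ z, q z ≤ -c * ‖z‖ ^ 2)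
    (hgq : (fun z => g z - q z) =o[𝓝 0] fun z => ‖z‖ ^ 2) :
    ∃ ε > 0, ∀ z, ‖z‖ ≤ ε → c / 2 * ‖z‖ ^ 2 ≤ |g z| := by
  obtain ⟨ε, hε, hball⟩ := Metric.nhds_basis_closedBall.eventually_iff.1 (hgq.def (half_pos hc))
  refine ⟨ε, hε, fun z hz => ?_⟩
  have hbound := hball (mem_closedBall_zero_iff.2 hz)
  rw [Real.norm_eq_abs, norm_pow, norm_norm] at hbound
  linarith [(abs_le.mp hbound).2, neg_abs_le (g z), hq z]

theorem stmt_5_general (n : ℕ)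
    (V : EuclideanSpace ℝ (Fin n) → ℝ) (a : EuclideanSpace ℝ (Fin n) → EuclideanSpace ℝ (Fin n))
    (hV : ContDiff ℝ 2 V) (ha : ContDiff ℝ 2 a)
    (ha0 : a 0 = 0)
    (hA : Function.Bijective (fderiv ℝ a 0))
    (hdiss : ∀ z, z ≠ 0 → fderiv ℝ V z (a z) < 0) :
    (∀ z : EuclideanSpace ℝ (Fin n), fderiv ℝ (fderiv ℝ V) 0 z (fderiv ℝ a 0 z) ≤ 0) ∧
    ((∀ z : EuclideanSpace ℝ (Fin n), z ≠ 0 → fderiv ℝ (fderiv ℝ V) 0 z (fderiv ℝ a 0 z) < 0) →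
      ∃ C > (0 : ℝ), ∃ ε > (0 : ℝ), ∀ z : EuclideanSpace ℝ (Fin n),
        ‖z‖ ≤ ε → |fderiv ℝ V z (a z)| ≥ C * ‖z‖ ^ 2) := by
  set H := fderiv ℝ (fderiv ℝ V) 0
  set A := fderiv ℝ a 0
  have hdV : DifferentiableAt ℝ (fderiv ℝ V) 0 :=
    (hV.fderiv_right (m := 1) (by norm_num)).differentiable (by norm_num) 0
  have hda : HasFDerivAt a A 0 := (ha.differentiable (by norm_num) 0).hasFDerivAt
  have hnonpos : ∀ z, fderiv ℝ V z (a z) ≤ 0 := fun z => by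
    rcases eq_or_ne z 0 with rfl | hz
    · simp [ha0]
    · exact (hdiss z hz).le
  have hcrit : fderiv ℝ V 0 = 0 :=
    eq_zero_of_clm_apply_nonpos hdV hda hA.2 ha0 (.of_forall hnonpos)
  have happrox := isLittleO_clm_apply_sub_linearization hdV.hasFDerivAt hcrit hda ha0
  have hhom : ∀ (s : ℝ) z, H (s • z) (A (s • z)) = s ^ 2 * H z (A z) := fun s z => by
    simp only [map_smul, smul_apply, smul_eq_mul]
    ring
  refine ⟨nonpos_of_isLittleO_sub hhom (.of_forall hnonpos) happrox, fun hneg => ?_⟩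
  obtain ⟨c, hc, hcoer⟩ := exists_le_neg_mul_norm_sq (by fun_prop) hhom hneg
  obtain ⟨ε, hε, hbound⟩ := exists_mul_norm_sq_le_abs_of_isLittleO_sub hc hcoer happrox
  exact ⟨c / 2, half_pos hc, ε, hε, hbound⟩

theorem stmt_5 (n : ℕ) (hn : 1 ≤ n)
    (V : EuclideanSpace ℝ (Fin n) → ℝ) (a : EuclideanSpace ℝ (Fin n) → EuclideanSpace ℝ (Fin n))
    (hV : ContDiff ℝ 2 V) (ha : ContDiff ℝ 2 a)
    (hV0 : V 0 = 0) (ha0 : a 0 = 0)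
    (hP : ∀ z, z ≠ 0 → 0 < fderiv ℝ (fderiv ℝ V) 0 z z)
    (hA : Function.Bijective (fderiv ℝ a 0))
    (hdiss : ∀ z, z ≠ 0 → fderiv ℝ V z (a z) < 0) :
    (∀ z : EuclideanSpace ℝ (Fin n), fderiv ℝ (fderiv ℝ V) 0 z (fderiv ℝ a 0 z) ≤ 0) ∧
    ((∀ z : EuclideanSpace ℝ (Fin n), z ≠ 0 → fderiv ℝ (fderiv ℝ V) 0 z (fderiv ℝ a 0 z) < 0) →
      ∃ C > (0 : ℝ), ∃ ε > (0 : ℝ), ∀ z : EuclideanSpace ℝ (Fin n),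
        ‖z‖ ≤ ε → |fderiv ℝ V z (a z)| ≥ C * ‖z‖ ^ 2) :=
  stmt_5_general n V a hV ha ha0 hA hdiss
end
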